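/- arXiv:2505.08185 — 2 statements merged into one kernel-verified Lean document; each statement's English description precedes it below -/
import Mathlib

section
/- Let G be a finite 3-connected simple graph and let H be a 2-connected subgraph of G. Suppose u and v are two vertices that lie in different components of G − V(H). Then {u, v} is a contractible non-edge of G. -/
open SimpleGraph

variable {V : Type*}

/-- A graph is `k`-connected: it has at least `k+1` vertices, and removing any set of
fewer than `k` vertices leaves a connected graph. -/
def KConnected (k : ℕ) (G : SimpleGraph V) : Prop :=
  k + 1 ≤ Nat.card V ∧ ∀ S : Set V, S.ncard < k → (G.induce Sᶜ).Connected

/-- Contraction of the non-edge `{u, v}`: `u` and `v` are replaced by a single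
vertex (represented here by `u`), adjacent to every vertex that was adjacent to
`u` or to `v`. -/
def contractNonEdge (G : SimpleGraph V) (u v : V) : SimpleGraph {w : V // w ≠ v} where
  Adj a b := a ≠ b ∧ (G.Adj a.1 b.1 ∨ (a.1 = u ∧ G.Adj v b.1) ∨ (b.1 = u ∧ G.Adj a.1 v))
  symm := ⟨by
    rintro a b ⟨hab, h | ⟨h1, h2⟩ | ⟨h1, h2⟩⟩
    · exact ⟨hab.symm, Or.inl h.symm⟩
    · exact ⟨hab.symm, Or.inr (Or.inr ⟨h1, h2.symm⟩)⟩
    · exact ⟨hab.symm, Or.inr (Or.inl ⟨h1, h2.symm⟩)⟩⟩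
  loopless := ⟨fun a h => h.1 rfl⟩

/-- `{u, v}` is a contractible non-edge of `G`: a non-edge whose contraction yields
a `3`-connected graph. -/
def IsContractibleNonEdge (G : SimpleGraph V) (u v : V) : Prop :=
  u ≠ v ∧ ¬ G.Adj u v ∧ KConnected 3 (contractNonEdge G u v)

/-- The set of contractible non-edges of `G`, as unordered pairs of vertices. -/
def contractibleNonEdges (G : SimpleGraph V) : Set (Sym2 V) :=
  {p | ∃ u v : V, p = s(u, v) ∧ IsContractibleNonEdge G u v}

/-- `S` is a cut of `G`: deleting the vertices of `S` leaves a disconnected graph. -/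
def IsCutSet (G : SimpleGraph V) (S : Set V) : Prop :=
  ¬ (G.induce Sᶜ).Preconnected

/-- `C` is the vertex set of a (connected) component of `G − S`. -/
def IsCompOf (G : SimpleGraph V) (S : Set V) (C : Set V) : Prop :=
  C.Nonempty ∧ C ⊆ Sᶜ ∧ (G.induce C).Connected ∧
    ∀ x ∈ C, ∀ y, y ∉ S → G.Adj x y → y ∈ C

-- walk-closure lemma: anything reachable from a C-point in induce s, where C is closed
-- under adjacency into s restricted by a predicate, stays in C.
lemma walk_closed (G : SimpleGraph V) {s : Set V} (C : Set V)
    (hcl : ∀ a ∈ C, ∀ b : V, b ∈ s → G.Adj a b → b ∈ C) :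
    ∀ {c d : ↥s} (_ : (G.induce s).Walk c d), ↑c ∈ C → ↑d ∈ C := by
  intro c d p
  induction p with
  | nil => exact id
  | cons h q ih =>
    intro hc
    exact ih (hcl _ hc _ (Subtype.coe_prop _) h)

lemma walk_reach (G : SimpleGraph V) {s : Set V} (C : Set V)
    (hcl : ∀ a ∈ C, ∀ b : V, b ∈ s → G.Adj a b → b ∈ C) {x : V} (hxC : x ∈ C) :
    ∀ {c d : ↥s} (_ : (G.induce s).Walk c d) (hc : ↑c ∈ C),
      (G.induce C).Reachable ⟨x, hxC⟩ ⟨↑c, hc⟩ →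
      ∃ hd : ↑d ∈ C, (G.induce C).Reachable ⟨x, hxC⟩ ⟨↑d, hd⟩ := by
  intro c d p
  induction p with
  | nil => exact fun hc hr => ⟨hc, hr⟩
  | @cons a b d h q ih =>
    intro hc hr
    have hb : ↑b ∈ C := hcl _ hc _ (Subtype.coe_prop _) h
    exact ih hb (hr.trans (SimpleGraph.Adj.reachable (by exact h)))

lemma key_lemma {V : Type*} [Fintype V] (G : SimpleGraph V) (hG : KConnected 3 G)
    (H : G.Subgraph) (hH : KConnected 2 H.coe)
    (u v : V) (hu : u ∈ H.vertsᶜ) (hv : v ∈ H.vertsᶜ)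
    (hsep : ¬ (G.induce H.vertsᶜ).Reachable ⟨u, hu⟩ ⟨v, hv⟩) (w : V) :
    (G.induce ({u, v, w} : Set V)ᶜ).Connected := by
  classical
  set T : Set V := {u, v, w} with hT
  have hnadj : ¬ G.Adj u v := fun h => hsep (SimpleGraph.Adj.reachable (by exact h))
  have hne : u ≠ v := by
    rintro rfl
    exact hsep (SimpleGraph.Reachable.refl _)
  by_cases hw : w = u ∨ w = v
  · -- then T = {u, v}, directly 3-connected
    have hTuv : T = {u, v} := by
      rcases hw with h | h <;> subst h <;> simp [hT, Set.insert_comm, Set.pair_comm]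
    rw [hTuv]
    exact hG.2 _ (lt_of_le_of_lt (Set.ncard_insert_le _ _) (by simp))
  push_neg at hw
  obtain ⟨hwu, hwv⟩ := hw
  -- A = H.verts minus w is nonempty and connected
  have hcard : 3 ≤ Nat.card H.verts := hH.1
  set A : Set V := H.verts \ {w} with hA
  have hAsub : A ⊆ Tᶜ := by
    rintro a ⟨haH, haw⟩
    simp only [hT, Set.mem_compl_iff, Set.mem_insert_iff, Set.mem_singleton_iff]
    push_neg
    refine ⟨fun h => hu (h ▸ haH), fun h => hv (h ▸ haH), haw⟩
  have hAne : A.Nonempty := by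
    have h1 : H.verts.ncard = Nat.card H.verts := (Nat.card_coe_set_eq _).symm
    have h2 : A.ncard + 1 ≥ H.verts.ncard := by
      rcases em (w ∈ H.verts) with hwH | hwH
      · rw [Set.ncard_diff_singleton_add_one hwH (Set.toFinite _)]
      · rw [hA, Set.diff_singleton_eq_self hwH]; omega
    rw [← Set.ncard_pos (Set.toFinite _)]
    omega
  have hAconn : (G.induce A).Connected := by
    have hS : ({x : H.verts | (x : V) = w} : Set H.verts).ncard < 2 := by
      have : ({x : H.verts | (x : V) = w} : Set H.verts).ncard ≤ 1 :=
        (Set.ncard_le_one (Set.toFinite _)).2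
          (fun a ha b hb => Subtype.ext (ha.trans hb.symm))
      omega
    have hconn := hH.2 _ hS
    refine hconn.map ⟨fun x => ⟨(x.1 : V), ⟨x.1.2, by exact x.2⟩⟩, ?_⟩ ?_
    · intro a b hab
      exact H.adj_sub (by exact hab)
    · rintro ⟨y, hyH, hyw⟩
      exact ⟨⟨⟨y, hyH⟩, hyw⟩, rfl⟩
  obtain ⟨a0, ha0⟩ := hAne
  -- main claim: every x in Tᶜ reaches some point of A
  have main : ∀ x (hx : x ∈ Tᶜ), ∃ a, ∃ ha : a ∈ A,
      (G.induce Tᶜ).Reachable ⟨x, hx⟩ ⟨a, hAsub ha⟩ := by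
    intro x hx
    by_contra hcon
    push_neg at hcon
    set C : Set V := {y | ∃ hy : y ∈ Tᶜ, (G.induce Tᶜ).Reachable ⟨x, hx⟩ ⟨y, hy⟩} with hC
    have hxC : x ∈ C := ⟨hx, SimpleGraph.Reachable.refl _⟩
    have hCT : C ⊆ Tᶜ := fun y hy => hy.1
    have hcl : ∀ a ∈ C, ∀ b : V, b ∈ Tᶜ → G.Adj a b → b ∈ C := by
      rintro a ⟨haT, har⟩ b hbT hab
      exact ⟨hbT, har.trans (SimpleGraph.Adj.reachable (by exact hab))⟩
    have hCA : ∀ y ∈ C, y ∉ A := by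
      rintro y ⟨hyT, hyr⟩ hyA
      exact hcon y hyA hyr
    have hCH : ∀ y ∈ C, y ∉ H.verts := by
      intro y hyC hyH
      have hyw : y ≠ w := by
        have := hCT hyC
        simp only [hT, Set.mem_compl_iff, Set.mem_insert_iff, Set.mem_singleton_iff] at this
        push_neg at this
        exact this.2.2
      exact hCA y hyC ⟨hyH, hyw⟩
    -- reachability within C
    have hreachC : ∀ y (hy : y ∈ C), (G.induce C).Reachable ⟨x, hxC⟩ ⟨y, hy⟩ := by
      rintro y ⟨hyT, hyr⟩
      obtain ⟨p⟩ := hyr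
      obtain ⟨hd, hr⟩ := walk_reach G C hcl hxC p hxC (SimpleGraph.Reachable.refl _)
      exact hr
    -- u has a neighbor in C
    have claim : ∀ t s : V, T = {t, s, w} → t ∈ Tᶜᶜ → t ≠ s → t ≠ w →
        ∃ c ∈ C, G.Adj t c := by
      intro t s hTts htT hts htw
      by_contra hnc
      push_neg at hnc
      have hS0 : ({s, w} : Set V).ncard < 3 :=
        lt_of_le_of_lt (Set.ncard_insert_le _ _) (by simp)
      have conn0 := hG.2 _ hS0
      have htS0 : t ∈ ({s, w} : Set V)ᶜ := by
        simp only [Set.mem_compl_iff, Set.mem_insert_iff, Set.mem_singleton_iff]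
        push_neg; exact ⟨hts, htw⟩
      have hxS0 : x ∈ ({s, w} : Set V)ᶜ := by
        intro hmem
        apply hx
        rw [hTts]
        rcases hmem with h | h
        · exact Or.inr (Or.inl h)
        · exact Or.inr (Or.inr h)
      have hreach := conn0.preconnected ⟨x, hxS0⟩ ⟨t, htS0⟩
      obtain ⟨p⟩ := hreach
      have htC : t ∈ C := by
        refine walk_closed G C ?_ p hxC
        rintro a haC b hbS0 hab
        by_cases hbT : b ∈ Tᶜ
        · exact hcl a haC b hbT hab
        · exfalso
          have hbt : b = t := by
            simp only [Set.mem_compl_iff, not_not] at hbT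
            rw [hTts] at hbT
            simp only [Set.mem_compl_iff, Set.mem_insert_iff, Set.mem_singleton_iff] at hbS0 hbT
            push_neg at hbS0
            rcases hbT with h | h | h
            · exact h
            · exact absurd h hbS0.1
            · exact absurd h hbS0.2
          exact hnc a haC (hbt ▸ hab.symm)
      exact htT (hCT htC)
    have hclaim_u : ∃ c ∈ C, G.Adj u c := by
      refine claim u v rfl ?_ hne hwu.symm
      simp [hT]
    have hclaim_v : ∃ c ∈ C, G.Adj v c := by
      refine claim v u ?_ ?_ hne.symm hwv.symm
      · rw [hT, Set.insert_comm]
      · simp [hT]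
    obtain ⟨a, haC, hua⟩ := hclaim_u
    obtain ⟨b, hbC, hvb⟩ := hclaim_v
    -- C ⊆ H.vertsᶜ
    have hCHc : C ⊆ H.vertsᶜ := fun y hy => hCH y hy
    have hab : (G.induce H.vertsᶜ).Reachable ⟨a, hCHc haC⟩ ⟨b, hCHc hbC⟩ := by
      have h1 := (hreachC a haC).symm.trans (hreachC b hbC)
      exact h1.map (G.induceHomOfLE hCHc).toHom
    exact hsep ((SimpleGraph.Adj.reachable (by exact hua : (G.induce H.vertsᶜ).Adj ⟨u, hu⟩ ⟨a, hCHc haC⟩)).trans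
      (hab.trans (SimpleGraph.Adj.reachable (by exact hvb.symm : (G.induce H.vertsᶜ).Adj ⟨b, hCHc hbC⟩ ⟨v, hv⟩))))
  -- combine via patches
  refine G.induce_connected_of_patches a0 (hAsub ha0) ?_
  intro x hx
  obtain ⟨a, ha, hr⟩ := main x hx
  have h0 : (G.induce Tᶜ).Reachable ⟨a0, hAsub ha0⟩ ⟨a, hAsub ha⟩ := by
    have := hAconn.preconnected ⟨a0, ha0⟩ ⟨a, ha⟩
    exact this.map (G.induceHomOfLE hAsub).toHom
  exact ⟨Tᶜ, le_refl _, hAsub ha0, hx, h0.trans hr.symm⟩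

/-- Let `G` be a finite 3-connected graph and `H` a 2-connected subgraph of `G`.
If `u` and `v` lie in different components of `G − V(H)`, then `{u, v}` is a
contractible non-edge of `G`. -/
theorem stmt0 {V : Type*} [Fintype V] (G : SimpleGraph V) (hG : KConnected 3 G)
    (H : G.Subgraph) (hH : KConnected 2 H.coe)
    (u v : V) (hu : u ∈ H.vertsᶜ) (hv : v ∈ H.vertsᶜ)
    (hsep : ¬ (G.induce H.vertsᶜ).Reachable ⟨u, hu⟩ ⟨v, hv⟩) :
    IsContractibleNonEdge G u v := by
  classical
  have hne : u ≠ v := by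
    rintro rfl
    exact hsep (SimpleGraph.Reachable.refl _)
  have hnadj : ¬ G.Adj u v := fun h => hsep (SimpleGraph.Adj.reachable (by exact h))
  refine ⟨hne, hnadj, ?_, ?_⟩
  · -- cardinality
    have hcardH : 3 ≤ Nat.card H.verts := hH.1
    have h5 : 5 ≤ Nat.card V := by
      have h1 : (insert u (insert v H.verts)).ncard = H.verts.ncard + 2 := by
        rw [Set.ncard_insert_of_notMem (by
          simp only [Set.mem_insert_iff, not_or]
          exact ⟨hne, hu⟩) (Set.toFinite _),
          Set.ncard_insert_of_notMem hv (Set.toFinite _)]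
      have h2 : (insert u (insert v H.verts)).ncard ≤ Nat.card V := by
        rw [← Set.ncard_univ]
        exact Set.ncard_le_ncard (Set.subset_univ _) (Set.toFinite _)
      have h3 : H.verts.ncard = Nat.card H.verts := (Nat.card_coe_set_eq _).symm
      omega
    have hcompl : Nat.card {w : V // w ≠ v} = Nat.card V - 1 := by
      have he : Nat.card {w : V // w ≠ v} = Nat.card ({v}ᶜ : Set V) :=
        Nat.card_congr (Equiv.subtypeEquivRight (by simp))
      have h4 : (({v} : Set V)ᶜ).ncard + 1 = Nat.card V := by
        rw [Set.compl_eq_univ_diff, Set.ncard_diff_singleton_add_one (Set.mem_univ v)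
          (Set.toFinite _), Set.ncard_univ]
      rw [he, Nat.card_coe_set_eq]
      omega
    omega
  · intro S' hS'
    set z : {w : V // w ≠ v} := ⟨u, hne⟩ with hz
    by_cases hzS : z ∈ S'
    · -- main case: use the key lemma
      have hS'' : (S' \ {z}).ncard ≤ 1 := by
        have := Set.ncard_diff_singleton_add_one hzS (Set.toFinite _)
        omega
      obtain ⟨w₀, hw₀mem, hsub⟩ : ∃ w₀ : {w : V // w ≠ v},
          (w₀ = z ∨ w₀ ∈ S') ∧ S' ⊆ {z, w₀} := by
        rcases Set.eq_empty_or_nonempty (S' \ {z}) with he | ⟨w₀, hw₀⟩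
        · refine ⟨z, Or.inl rfl, fun y hy => ?_⟩
          by_cases hyz : y = z
          · exact Or.inl hyz
          · exact absurd (Set.eq_empty_iff_forall_notMem.1 he y ⟨hy, hyz⟩) (fun h => h)
        · refine ⟨w₀, Or.inr hw₀.1, fun y hy => ?_⟩
          by_cases hyz : y = z
          · exact Or.inl hyz
          · exact Or.inr ((Set.ncard_le_one (Set.toFinite _)).1 hS'' y ⟨hy, hyz⟩ w₀ hw₀)
      have conn := key_lemma G hG H hH u v hu hv hsep (w₀ : V)
      set T : Set V := {u, v, (w₀ : V)} with hT
      have hnev : ∀ x : ↥Tᶜ, (x : V) ≠ v := fun x h => x.2 (Or.inr (Or.inl h))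
      have hf : ∀ x : ↥Tᶜ, (⟨(x : V), hnev x⟩ : {w : V // w ≠ v}) ∈ S'ᶜ := by
        intro x hmem
        rcases hsub hmem with h | h
        · exact x.2 (Or.inl (congrArg Subtype.val h))
        · exact x.2 (Or.inr (Or.inr (congrArg Subtype.val h)))
      refine conn.map ⟨fun x : ↥Tᶜ => (⟨⟨(x : V), hnev x⟩, hf x⟩ : ↥S'ᶜ), ?_⟩ ?_
      · intro a b hab
        have hab' : G.Adj (a : V) (b : V) := hab
        exact And.intro (fun h => hab'.ne (by exact congrArg (fun t : {w : V // w ≠ v} => (t : V)) h))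
          (Or.inl hab')
      · rintro ⟨⟨y, hyv⟩, hyS⟩
        have hyT : y ∈ Tᶜ := by
          intro hmem
          simp only [hT, Set.mem_insert_iff, Set.mem_singleton_iff] at hmem
          rcases hmem with h | h | h
          · exact hyS (by
              rw [show (⟨y, hyv⟩ : {w : V // w ≠ v}) = z from Subtype.ext h]; exact hzS)
          · exact hyv h
          · rcases hw₀mem with h' | h'
            · exact hyS (by
                rw [show (⟨y, hyv⟩ : {w : V // w ≠ v}) = z from
                  Subtype.ext (h.trans (congrArg Subtype.val h'))]; exact hzS)
            · exact hyS (by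
                rw [show (⟨y, hyv⟩ : {w : V // w ≠ v}) = w₀ from Subtype.ext h]; exact h')
        exact ⟨⟨y, hyT⟩, rfl⟩
    · -- z ∉ S' : direct transfer from 3-connectivity of G
      set T : Set V := Subtype.val '' S' with hT
      have hTcard : T.ncard < 3 := by
        rw [hT, Set.ncard_image_of_injective _ Subtype.val_injective]; exact hS'
      have conn := hG.2 T hTcard
      have hmemf : ∀ (x : ↥Tᶜ) (hxv : (x : V) ≠ v),
          (⟨(x : V), hxv⟩ : {w : V // w ≠ v}) ∈ S'ᶜ := by
        intro x hxv hmem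
        exact x.2 (Set.mem_image_of_mem Subtype.val hmem)
      refine conn.map ⟨fun x : ↥Tᶜ => if hxv : (x : V) = v then (⟨z, hzS⟩ : ↥S'ᶜ)
        else ⟨⟨(x : V), hxv⟩, hmemf x hxv⟩, ?_⟩ ?_
      · intro a b hab
        have hab' : G.Adj ↑a ↑b := hab
        by_cases hav : (a : V) = v <;> by_cases hbv : (b : V) = v
        · exact absurd (hav ▸ hbv ▸ hab') (G.irrefl)
        · simp only [dif_pos hav, dif_neg hbv]
          have hbu : (b : V) ≠ u := fun h => hnadj (by rw [hav, h] at hab'; exact hab'.symm)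
          have hvb : G.Adj v (b : V) := by rw [← hav]; exact hab'
          exact And.intro (fun h => hbu (congrArg (fun t => ((t : {w : V // w ≠ v}) : V)) h).symm)
            (Or.inr (Or.inl ⟨rfl, hvb⟩))
        · simp only [dif_neg hav, dif_pos hbv]
          have hau : (a : V) ≠ u := fun h => hnadj (by rw [h, hbv] at hab'; exact hab')
          have hav' : G.Adj (a : V) v := by rw [← hbv]; exact hab'
          exact And.intro (fun h => hau (congrArg (fun t => ((t : {w : V // w ≠ v}) : V)) h))
            (Or.inr (Or.inr ⟨rfl, hav'⟩))
        · simp only [dif_neg hav, dif_neg hbv]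
          exact And.intro (fun h => hab'.ne (congrArg (fun t => ((t : {w : V // w ≠ v}) : V)) h))
            (Or.inl hab')
      · rintro ⟨⟨y, hyv⟩, hyS⟩
        have hyT : y ∈ Tᶜ := by
          rintro ⟨s, hs, hsy⟩
          exact hyS (by
            have : s = ⟨y, hyv⟩ := Subtype.ext hsy
            rw [← this]; exact hs)
        exact ⟨⟨y, hyT⟩, dif_neg hyv⟩
end

section
/- Let G be a finite 3-connected simple graph of order n, where n ≥ 6. Then the number of contractible non-edges of G is at most n(n−5)/2. -/
open SimpleGraph

variable {V : Type*}

/-!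
A non-edge both of whose ends lie in a vertex cut `S` with at most three vertices is not
contractible: after contracting it, `S` shrinks to a cut of at most two vertices. So it suffices
to show that edges and such non-edges together number at least `2n`, and then
`n(n-1)/2 - 2n = n(n-5)/2`.

If every degree is at least `4`, the edges alone suffice. Otherwise delete a vertex `v` of
degree `3` and join its neighbours pairwise (a Y-Δ transformation). The result is again
3-connected, its small cuts lift to `G`, and the new edges inside `N(v)` were small-cut
non-edges of `G` because `N(v)` separates `v`; so the count drops by at least `3` while `n`
drops by `1`. At `n = 5` the complement of `G` is a matching, which forces a count of at
least `9`, enough for the step to `n = 6`.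
-/

lemma Nat.card_subtype_ne [Finite V] (v : V) : Nat.card {w : V // w ≠ v} = Nat.card V - 1 := by
  classical
  have := Fintype.ofFinite V
  simp only [ne_eq, Nat.card_eq_fintype_card, Fintype.card_subtype_compl, Fintype.card_unique]

lemma Nat.choose_two_eq_mul_sub_five_div_two_add {n : ℕ} (hn : 5 ≤ n) :
    n.choose 2 = n * (n - 5) / 2 + 2 * n := by
  obtain ⟨k, rfl⟩ := Nat.exists_eq_add_of_le' hn
  rw [Nat.choose_two_right, show k + 5 - 1 = k + 4 by omega, Nat.add_sub_cancel,
    show (k + 5) * (k + 4) = (k + 5) * k + 2 * (2 * (k + 5)) by ring,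
    Nat.add_mul_div_left _ _ two_pos]

section

variable {G : SimpleGraph V}

lemma SimpleGraph.not_reachable_of_forall_not_adj {x y : V} (hxy : x ≠ y)
    (hx : ∀ z, ¬ G.Adj x z) : ¬ G.Reachable x y :=
  fun ⟨p⟩ => hx _ (p.adj_snd (Walk.not_nil_of_ne hxy))

lemma exists_ne_not_adj_of_ncard_neighborSet_add_one_lt [Finite V] {v : V}
    (h : (G.neighborSet v).ncard + 1 < Nat.card V) : ∃ w, w ≠ v ∧ ¬ G.Adj v w := by
  obtain ⟨w, hw⟩ : ∃ w, w ∉ insert v (G.neighborSet v) := by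
    rw [← Set.ne_univ_iff_exists_notMem]
    intro huniv
    have := Set.ncard_insert_le v (G.neighborSet v)
    rw [huniv, Set.ncard_univ] at this
    omega
  rw [Set.mem_insert_iff, not_or] at hw
  exact ⟨w, hw.1, hw.2⟩

lemma isCutSet_neighborSet {v w : V} (hwv : w ≠ v) (hw : ¬ G.Adj v w) :
    IsCutSet G (G.neighborSet v) := fun h =>
  not_reachable_of_forall_not_adj (G := G.induce (G.neighborSet v)ᶜ) (x := ⟨v, G.irrefl⟩)
    (y := ⟨w, hw⟩) (fun h => hwv (congrArg Subtype.val h).symm)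
    (fun z (hz : G.Adj v z) => z.2 hz) (h _ _)

lemma isCutSet_compl_pair {x y : V} (hxy : x ≠ y) (h : ¬ G.Adj x y) :
    IsCutSet G {x, y}ᶜ := fun hpre =>
  not_reachable_of_forall_not_adj (x := ⟨x, by simp⟩) (y := ⟨y, by simp⟩)
    (fun h => hxy (congrArg Subtype.val h))
    (fun z (hz : G.Adj x z) => by
      obtain hzx | hzy : z.1 = x ∨ z.1 = y := by simpa using z.2
      · exact G.irrefl (hzx ▸ hz)
      · exact h (hzy ▸ hz))
    (hpre _ _)

lemma KConnected.le_ncard_neighborSet [Finite V] {k : ℕ} (hG : KConnected k G) (v : V) :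
    k ≤ (G.neighborSet v).ncard := by
  by_contra! hlt
  obtain ⟨w, hwv, hw⟩ :=
    exists_ne_not_adj_of_ncard_neighborSet_add_one_lt (G := G) (v := v) (by have := hG.1; omega)
  exact isCutSet_neighborSet hwv hw (hG.2 _ hlt).preconnected

lemma mul_card_le_two_mul_ncard_edgeSet [Finite V] {k : ℕ}
    (h : ∀ v, k ≤ (G.neighborSet v).ncard) : k * Nat.card V ≤ 2 * G.edgeSet.ncard := by
  classical
  have := Fintype.ofFinite V
  calc k * Nat.card V = ∑ _v : V, k := by simp [mul_comm]
    _ ≤ ∑ v, G.degree v := Finset.sum_le_sum fun v _ => by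
        rw [← card_neighborSet_eq_degree, ← Nat.card_eq_fintype_card, Nat.card_coe_set_eq]
        exact h v
    _ = 2 * G.edgeSet.ncard := by
        rw [sum_degrees_eq_twice_card_edges, ← Set.ncard_coe_finset, coe_edgeFinset]

lemma ncard_edgeSet_add_ncard_edgeSet_compl [Finite V] (G : SimpleGraph V) :
    G.edgeSet.ncard + Gᶜ.edgeSet.ncard = (Nat.card V).choose 2 := by
  classical
  have := Fintype.ofFinite V
  rw [← Set.ncard_union_eq (disjoint_edgeSet.2 disjoint_compl_right), ← edgeSet_sup,
    sup_compl_eq_top, ← coe_edgeFinset, Set.ncard_coe_finset,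
    card_edgeFinset_top_eq_card_choose_two, Nat.card_eq_fintype_card]

lemma ncard_neighborSet_compl [Finite V] (r : V) :
    (Gᶜ.neighborSet r).ncard = Nat.card V - (G.neighborSet r).ncard - 1 := by
  rw [neighborSet_compl, Set.ncard_sdiff_singleton_of_mem G.irrefl, Set.ncard_compl]

lemma eq_of_mem_edgeSet_of_ncard_neighborSet_le_one [Finite V] {p q : Sym2 V} {r : V}
    (hp : p ∈ G.edgeSet) (hq : q ∈ G.edgeSet) (hrp : r ∈ p) (hrq : r ∈ q)
    (hr : (G.neighborSet r).ncard ≤ 1) : p = q := by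
  obtain ⟨a, rfl⟩ := Sym2.mem_iff_exists.1 hrp
  obtain ⟨b, rfl⟩ := Sym2.mem_iff_exists.1 hrq
  rw [Set.ncard_le_one] at hr
  rw [hr a hp b hq]

def smallCutNonEdges (G : SimpleGraph V) : Set (Sym2 V) :=
  {p ∈ Gᶜ.edgeSet | ∃ S : Set V, p ∈ S.sym2 ∧ S.ncard ≤ 3 ∧ IsCutSet G S}

lemma smallCutNonEdges_subset_edgeSet_compl : smallCutNonEdges G ⊆ Gᶜ.edgeSet :=
  fun _ hp => hp.1

lemma disjoint_edgeSet_smallCutNonEdges : Disjoint G.edgeSet (smallCutNonEdges G) :=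
  (disjoint_edgeSet.2 disjoint_compl_right).mono_right smallCutNonEdges_subset_edgeSet_compl

lemma contractibleNonEdges_subset_edgeSet_compl : contractibleNonEdges G ⊆ Gᶜ.edgeSet := by
  rintro _ ⟨u, v, rfl, huv, hadj, -⟩
  exact ⟨huv, hadj⟩

lemma preconnected_induce_of_contractNonEdge {u v : V} {S : Set V} (hu : u ∈ S) (hv : v ∈ S)
    (h : ((contractNonEdge G u v).induce (Subtype.val ⁻¹' S)ᶜ).Preconnected) :
    (G.induce Sᶜ).Preconnected := by
  let f : (contractNonEdge G u v).induce (Subtype.val ⁻¹' S)ᶜ →g G.induce Sᶜ :=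
    { toFun := fun w => ⟨w.1.1, w.2⟩
      map_rel' := by
        rintro a b ⟨-, hab | ⟨ha, -⟩ | ⟨hb, -⟩⟩
        · exact hab
        · exact absurd (show a.1.1 ∈ S by rw [show a.1.1 = u from ha]; exact hu) a.2
        · exact absurd (show b.1.1 ∈ S by rw [show b.1.1 = u from hb]; exact hu) b.2 }
  intro x y
  have hne (x : ↥Sᶜ) : x.1 ≠ v := fun hxv => x.2 (hxv ▸ hv)
  exact (h ⟨⟨x.1, hne x⟩, x.2⟩ ⟨⟨y.1, hne y⟩, y.2⟩).map f

lemma not_kConnected_contractNonEdge [Finite V] {u v : V} {S : Set V} (hu : u ∈ S) (hv : v ∈ S)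
    (hS : S.ncard ≤ 3) (hcut : IsCutSet G S) : ¬ KConnected 3 (contractNonEdge G u v) := by
  intro hK
  have hpre : (Subtype.val ⁻¹' S : Set {w : V // w ≠ v}) = Subtype.val ⁻¹' (S \ {v}) := by
    ext w
    simp [w.2]
  have hlt : (Subtype.val ⁻¹' S : Set {w : V // w ≠ v}).ncard < 3 := by
    rw [hpre, Set.ncard_preimage_of_injective_subset_range Subtype.val_injective
        fun x hx => ⟨⟨x, hx.2⟩, rfl⟩,
      Set.ncard_sdiff_singleton_of_mem hv]
    omega
  exact hcut (preconnected_induce_of_contractNonEdge hu hv (hK.2 _ hlt).preconnected)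

lemma disjoint_contractibleNonEdges_smallCutNonEdges [Finite V] :
    Disjoint (contractibleNonEdges G) (smallCutNonEdges G) := by
  rw [Set.disjoint_left]
  rintro _ ⟨u, v, rfl, -, -, hK⟩ ⟨-, S, huv, hS, hcut⟩
  rw [Set.mk_mem_sym2_iff] at huv
  exact not_kConnected_contractNonEdge huv.1 huv.2 hS hcut hK

/-- For `v` of degree three this is the Y-Δ transformation at `v`. -/
def wyeDelta (G : SimpleGraph V) (v : V) : SimpleGraph {w : V // w ≠ v} where
  Adj x y := x ≠ y ∧ (G.Adj x y ∨ (G.Adj v x ∧ G.Adj v y))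
  symm := ⟨fun _ _ ⟨hne, h⟩ => ⟨hne.symm, h.imp (·.symm) And.symm⟩⟩
  loopless := ⟨fun _ h => h.1 rfl⟩

lemma preconnected_induce_wyeDelta {v : V} {S : Set {w : V // w ≠ v}}
    (h : (G.induce (Subtype.val '' S)ᶜ).Preconnected) :
    ((wyeDelta G v).induce Sᶜ).Preconnected := by
  classical
  set H := (wyeDelta G v).induce Sᶜ
  intro x y
  -- Walks of `G - S` are pushed into `H` by replacing `v` with a vertex `c` that `H` connects
  -- to every neighbour of `v`.
  obtain ⟨c, hc⟩ : ∃ c : ↥Sᶜ, ∀ b : ↥Sᶜ, G.Adj v b.1 → H.Reachable c b := by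
    by_cases hN : ∃ a : ↥Sᶜ, G.Adj v a.1
    · obtain ⟨a, ha⟩ := hN
      refine ⟨a, fun b hb => ?_⟩
      by_cases hab : a = b
      · rw [hab]
      · exact Adj.reachable ⟨fun h => hab (Subtype.ext h), Or.inr ⟨ha, hb⟩⟩
    · simp only [not_exists] at hN
      exact ⟨x, fun b hb => absurd hb (hN b)⟩
  let f : ↥(Subtype.val '' S)ᶜ → ↥Sᶜ := fun w =>
    if hw : w.1 = v then c else ⟨⟨w.1, hw⟩, fun hS => w.2 ⟨_, hS, rfl⟩⟩
  have hf : ∀ a b, (G.induce (Subtype.val '' S)ᶜ).Adj a b → H.Reachable (f a) (f b) := by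
    rintro ⟨a, ha⟩ ⟨b, hb⟩ (hab : G.Adj a b)
    by_cases hav : a = v <;> by_cases hbv : b = v
    · exact absurd (hav.trans hbv.symm) hab.ne
    · simp only [f, dif_pos hav, dif_neg hbv]
      apply hc
      exact hav ▸ hab
    · simp only [f, dif_neg hav, dif_pos hbv]
      apply Reachable.symm
      apply hc
      exact hbv ▸ hab.symm
    · simp only [f, dif_neg hav, dif_neg hbv]
      exact Adj.reachable ⟨fun h => hab.ne (congrArg Subtype.val h), Or.inl hab⟩
  have hwalk {a b} : (G.induce (Subtype.val '' S)ᶜ).Walk a b → H.Reachable (f a) (f b) := by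
    intro p
    induction p with
    | nil => rfl
    | cons hab _ ih => exact (hf _ _ hab).trans ih
  have hmem (w : ↥Sᶜ) : w.1.1 ∈ (Subtype.val '' S)ᶜ :=
    Subtype.val_injective.mem_set_image.not.2 w.2
  have hfw (w : ↥Sᶜ) : f ⟨w.1.1, hmem w⟩ = w := dif_neg w.1.2
  obtain ⟨p⟩ := h ⟨x.1.1, hmem x⟩ ⟨y.1.1, hmem y⟩
  simpa only [hfw] using hwalk p

lemma KConnected.wyeDelta [Finite V] {k : ℕ} {v : V} (hG : KConnected k G)
    (hk : k + 2 ≤ Nat.card V) :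
    KConnected k (wyeDelta G v) := by
  have hcard := Nat.card_subtype_ne v
  refine ⟨by omega, fun S hS =>
    (connected_iff _).2 ⟨preconnected_induce_wyeDelta (hG.2 _ ?_).preconnected, ?_⟩⟩
  · rwa [Set.ncard_image_of_injective _ Subtype.val_injective]
  · obtain ⟨w, hw⟩ := Set.ne_univ_iff_exists_notMem S |>.1 fun h => by
      rw [h, Set.ncard_univ] at hS
      omega
    exact ⟨⟨w, hw⟩⟩

lemma ncard_edgeSet_wyeDelta_add_le [Finite V] {v : V} (hdeg : (G.neighborSet v).ncard ≤ 3)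
    (hcard : 5 ≤ Nat.card V) :
    (wyeDelta G v).edgeSet.ncard + (smallCutNonEdges (wyeDelta G v)).ncard +
      (G.neighborSet v).ncard ≤ G.edgeSet.ncard + (smallCutNonEdges G).ncard := by
  obtain ⟨w, hwv, hw⟩ :=
    exists_ne_not_adj_of_ncard_neighborSet_add_one_lt (G := G) (v := v) (by omega)
  have hcut := isCutSet_neighborSet hwv hw
  set G' := wyeDelta G v
  set φ : Sym2 {w : V // w ≠ v} → Sym2 V := Sym2.map Subtype.val
  set star := (fun w => s(v, w)) '' G.neighborSet v
  have hφ : Function.Injective φ := Sym2.map.injective Subtype.val_injective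
  have hedges : φ '' G'.edgeSet ⊆ G.edgeSet ∪ smallCutNonEdges G := by
    rintro _ ⟨p, hp, rfl⟩
    induction p using Sym2.ind with | _ x y => ?_
    obtain ⟨hxy, hadj | ⟨hx, hy⟩⟩ := hp
    · exact Or.inl hadj
    · by_cases hadj : G.Adj x y
      · exact Or.inl hadj
      · exact Or.inr ⟨⟨fun h => hxy (Subtype.ext h), hadj⟩, _, ⟨hx, hy⟩, hdeg, hcut⟩
  have hcuts : φ '' smallCutNonEdges G' ⊆ smallCutNonEdges G := by
    rintro _ ⟨p, ⟨hp, S, hpS, hS, hS'⟩, rfl⟩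
    refine ⟨?_, Subtype.val '' S, Set.sym2_image ▸ ⟨p, hpS, rfl⟩,
      (Set.ncard_image_of_injective _ Subtype.val_injective).trans_le hS,
      mt preconnected_induce_wyeDelta hS'⟩
    induction p using Sym2.ind with | _ x y => ?_
    exact ⟨fun h => hp.1 (Subtype.ext h), fun h => hp.2 ⟨hp.1, Or.inl h⟩⟩
  have hstar : star ⊆ G.edgeSet := by
    rintro _ ⟨w, hw, rfl⟩
    exact hw
  have hdisj : Disjoint (φ '' G'.edgeSet ∪ φ '' smallCutNonEdges G') star := by
    rw [Set.disjoint_left]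
    rintro _ (⟨p, -, rfl⟩ | ⟨p, -, rfl⟩) ⟨w, -, hw⟩ <;>
    · have hv : v ∈ φ p := by
        rw [← hw]
        exact Sym2.mem_mk_left v w
      obtain ⟨a, -, ha⟩ := Sym2.mem_map.1 hv
      exact a.2 ha
  calc G'.edgeSet.ncard + (smallCutNonEdges G').ncard + (G.neighborSet v).ncard
      = (φ '' G'.edgeSet ∪ φ '' smallCutNonEdges G' ∪ star).ncard := by
        rw [Set.ncard_union_eq hdisj,
          Set.ncard_union_eq ((Set.disjoint_image_iff hφ).2 disjoint_edgeSet_smallCutNonEdges),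
          Set.ncard_image_of_injective _ hφ, Set.ncard_image_of_injective _ hφ,
          Set.ncard_image_of_injective _ fun _ _ => Sym2.congr_right.1]
    _ ≤ (G.edgeSet ∪ smallCutNonEdges G).ncard :=
        Set.ncard_le_ncard <| Set.union_subset
          (Set.union_subset hedges (hcuts.trans Set.subset_union_right))
          (hstar.trans Set.subset_union_left)
    _ = G.edgeSet.ncard + (smallCutNonEdges G).ncard :=
        Set.ncard_union_eq disjoint_edgeSet_smallCutNonEdges

lemma nine_le_ncard_edgeSet_add_ncard_smallCutNonEdges [Finite V] (hG : KConnected 3 G)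
    (h5 : Nat.card V = 5) : 9 ≤ G.edgeSet.ncard + (smallCutNonEdges G).ncard := by
  have hsplit := ncard_edgeSet_add_ncard_edgeSet_compl G
  rw [h5, show (5 : ℕ).choose 2 = 10 from rfl] at hsplit
  by_cases hNE : Gᶜ.edgeSet.ncard ≤ 1
  · omega
  suffices Gᶜ.edgeSet ⊆ smallCutNonEdges G by
    have := Set.ncard_le_ncard this
    omega
  intro p hp
  obtain ⟨q, hq, hqp⟩ := Set.exists_ne_of_one_lt_ncard (s := Gᶜ.edgeSet) (by omega) p
  -- The complement of `G` is a matching, so the non-edge `q` misses `p` and its complement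
  -- is a three-vertex cut containing `p`.
  have hdisj (a : V) (hap : a ∈ p) (haq : a ∈ q) : False := by
    refine hqp (eq_of_mem_edgeSet_of_ncard_neighborSet_le_one hq hp haq hap ?_)
    have := hG.le_ncard_neighborSet a
    exact (ncard_neighborSet_compl a).trans_le (by omega)
  induction q using Sym2.ind with | _ z w => ?_
  have hzw := (compl_adj G z w).1 hq
  have hout (a : V) (hap : a ∈ p) : a ∈ ({z, w} : Set V)ᶜ := by
    rintro (rfl | rfl)
    exacts [hdisj a hap (Sym2.mem_mk_left a w), hdisj a hap (Sym2.mem_mk_right z a)]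
  refine ⟨hp, {z, w}ᶜ, ?_, ?_, isCutSet_compl_pair hzw.1 hzw.2⟩
  · induction p using Sym2.ind with
    | _ x y => exact ⟨hout x (Sym2.mem_mk_left x y), hout y (Sym2.mem_mk_right x y)⟩
  · rw [Set.ncard_compl, Set.ncard_pair hzw.1, h5]

theorem two_mul_card_le_ncard_edgeSet_add_ncard_smallCutNonEdges [Finite V]
    (hG : KConnected 3 G) (h6 : 6 ≤ Nat.card V) :
    2 * Nat.card V ≤ G.edgeSet.ncard + (smallCutNonEdges G).ncard := by
  induction hn : Nat.card V using Nat.strong_induction_on generalizing V with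
  | _ n ih =>
  by_cases hdeg : ∀ w, 4 ≤ (G.neighborSet w).ncard
  · have := mul_card_le_two_mul_ncard_edgeSet hdeg
    omega
  obtain ⟨v, hv⟩ := not_forall.1 hdeg
  have hv3 : (G.neighborSet v).ncard = 3 := by
    have := hG.le_ncard_neighborSet v
    omega
  have hcard := Nat.card_subtype_ne v
  have hG' : KConnected 3 (wyeDelta G v) := hG.wyeDelta (by omega)
  have hrec : 2 * (n - 1) ≤
      (wyeDelta G v).edgeSet.ncard + (smallCutNonEdges (wyeDelta G v)).ncard + 1 := by
    rcases (show n = 6 ∨ 7 ≤ n by omega) with rfl | h7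
    · have := nine_le_ncard_edgeSet_add_ncard_smallCutNonEdges hG' (by omega)
      omega
    · have := ih (n - 1) (by omega) hG' (by omega) (by omega)
      omega
  have := ncard_edgeSet_wyeDelta_add_le (G := G) hv3.le (by omega)
  omega

end

/-- Let `G` be a finite 3-connected graph of order `n ≥ 6`. Then the number of
contractible non-edges of `G` is at most `n(n−5)/2`. -/
theorem stmt6 {V : Type*} [Fintype V] (G : SimpleGraph V) (hG : KConnected 3 G)
    (n : ℕ) (hn : n = Fintype.card V) (h6 : 6 ≤ n) :
    (contractibleNonEdges G).ncard ≤ n * (n - 5) / 2 := by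
  rw [← Nat.card_eq_fintype_card] at hn
  subst hn
  have hcount := two_mul_card_le_ncard_edgeSet_add_ncard_smallCutNonEdges hG h6
  have hsplit := ncard_edgeSet_add_ncard_edgeSet_compl G
  have hsub := Set.ncard_le_ncard (Set.union_subset contractibleNonEdges_subset_edgeSet_compl
    (smallCutNonEdges_subset_edgeSet_compl (G := G)))
  rw [Set.ncard_union_eq disjoint_contractibleNonEdges_smallCutNonEdges] at hsub
  rw [Nat.choose_two_eq_mul_sub_five_div_two_add (by omega)] at hsplit
  omega
end
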